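/- Let A be a sequence of n distinct integers between 1 and n whose permutation graph G_A is bipartite, and let I and J be maximum feasible sets for A. If there exists a reconfiguration sequence between I and J, then there exists a reconfiguration sequence between I and J of length exactly |I \ J|. -/

import Mathlib

/-- One step of patience sorting: place index `i` (with value `a i`) on the
leftmost pile whose current top element is greater than `a i`, or start a
new pile at the right end if no such pile exists.  Each pile is a list of
indices with the head being the top (most recently placed) element. -/
def place (a : ℕ → ℕ) : List (List ℕ) → ℕ → List (List ℕ)
  | [], i => [[i]]
  | p :: ps, i => if a i < a p.headI then (i :: p) :: ps else p :: place a ps i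

/-- The (nonempty) piles obtained by patience sorting, processing the values
`a i` for `i ∈ idxs` in order. -/
def pilesOf (a : ℕ → ℕ) (idxs : List ℕ) : List (List ℕ) :=
  idxs.foldl (place a) []

/-- `I` is the index set of an increasing subsequence of `a`. -/
def Feasible (a : ℕ → ℕ) (I : Finset ℕ) : Prop :=
  ∀ i ∈ I, ∀ j ∈ I, i < j → a i < a j

/-- The permutation graph of the sequence `a₁, …, aₙ`: vertices are the
indices `1, …, n`, and `i < j` are adjacent iff `a i > a j`. -/
def permGraph (a : ℕ → ℕ) (n : ℕ) : SimpleGraph ℕ where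
  Adj i j := i ∈ Finset.Icc 1 n ∧ j ∈ Finset.Icc 1 n ∧
    ((i < j ∧ a j < a i) ∨ (j < i ∧ a i < a j))
  symm := by
    constructor
    intro i j ⟨hi, hj, h⟩
    exact ⟨hj, hi, h.symm⟩
  loopless := by
    constructor
    intro i ⟨_, _, h⟩
    rcases h with ⟨h, _⟩ | ⟨h, _⟩ <;> exact lt_irrefl i h

/-- A maximum feasible set for `a₁, …, aₙ`: a feasible subset of the index
set `{1, …, n}` of largest cardinality (equivalently, a maximum independent
set of the permutation graph). -/
def MaxFeasibleIcc (a : ℕ → ℕ) (n : ℕ) (I : Finset ℕ) : Prop :=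
  I ⊆ Finset.Icc 1 n ∧ Feasible a I ∧
    ∀ J ⊆ Finset.Icc 1 n, Feasible a J → J.card ≤ I.card

/-- One reconfiguration step: `J` is obtained from `I` by simultaneously
adding an element `j ∉ I` and removing an element `k ∈ I`. -/
def ReconStep (I J : Finset ℕ) : Prop :=
  ∃ j k : ℕ, j ∉ I ∧ k ∈ I ∧ J = insert j I \ {k}

/-- `f 0, f 1, …, f ℓ` is a reconfiguration sequence of feasible sets
(subsets of the index universe `S`), each obtained from the previous one by a
single exchange step. -/
def ReconSeq (a : ℕ → ℕ) (S : Finset ℕ) (ℓ : ℕ) (f : ℕ → Finset ℕ) : Prop :=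
  (∀ i ≤ ℓ, f i ⊆ S ∧ Feasible a (f i)) ∧
    ∀ i < ℓ, ReconStep (f i) (f (i + 1))

/-!
Call the height of an index the length of the longest increasing subsequence ending there.
Indices of equal height form a decreasing subsequence, and a bipartite permutation graph has no
triangle, i.e. no decreasing subsequence of length three, so each height class has at most two
elements. A maximum feasible set of size `κ` meets each of the height classes `1, …, κ` exactly once;
hence for maximum feasible sets `I`, `X`, `J` two of their elements of height `t` coincide, and the
median `(I ∩ X) ∪ (X ∩ J) ∪ (I ∩ J)` is again a maximum feasible set.

Projecting a reconfiguration sequence `I = X₀, …, X_ℓ = J` by `X ↦ median3 I X J` gives a sequence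
between `I ∩ J` and `I ∪ J` whose steps are trivial or exchanges. Its first nontrivial step out of
`I` must exchange an element of `I \ J` for one of `J \ I`, and induction on `ℓ` finishes the proof.
-/

open Finset

def NoDecreasingTriple (a : ℕ → ℕ) (S : Finset ℕ) : Prop :=
  ∀ i ∈ S, ∀ j ∈ S, ∀ k ∈ S, i < j → j < k → a j < a i → a k < a j → False

def IsMaxFeasible (a : ℕ → ℕ) (S I : Finset ℕ) : Prop :=
  I ⊆ S ∧ Feasible a I ∧ ∀ J ⊆ S, Feasible a J → J.card ≤ I.card

open Classical in
noncomputable def chainsEndingAt (a : ℕ → ℕ) (S : Finset ℕ) (i : ℕ) : Finset (Finset ℕ) :=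
  S.powerset.filter fun T => Feasible a T ∧ i ∈ T ∧ ∀ j ∈ T, j ≤ i

noncomputable def height (a : ℕ → ℕ) (S : Finset ℕ) (i : ℕ) : ℕ :=
  (chainsEndingAt a S i).sup card

lemma noDecreasingTriple_of_colorable_two {a : ℕ → ℕ} {n : ℕ}
    (h : (permGraph a n).Colorable 2) : NoDecreasingTriple a (Icc 1 n) := by
  intro i hi j hj k hk hij hjk hji hkj
  refine h.cliqueFree (by norm_num : 2 < 3) {i, j, k}
    (SimpleGraph.is3Clique_triple_iff.2 ⟨?_, ?_, ?_⟩)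
  · exact ⟨hi, hj, .inl ⟨hij, hji⟩⟩
  · exact ⟨hi, hk, .inl ⟨hij.trans hjk, hkj.trans hji⟩⟩
  · exact ⟨hj, hk, .inl ⟨hjk, hkj⟩⟩

section Height

variable {a : ℕ → ℕ} {S : Finset ℕ}

lemma feasible_singleton (a : ℕ → ℕ) (i : ℕ) : Feasible a {i} := by
  intro p hp q hq hpq
  rw [mem_singleton] at hp hq
  omega

lemma Feasible.insert {T : Finset ℕ} {j : ℕ} (hT : Feasible a T)
    (hj : ∀ x ∈ T, x < j ∧ a x < a j) : Feasible a (insert j T) := by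
  intro p hp q hq hpq
  rcases mem_insert.1 hp with hpj | hpT <;> rcases mem_insert.1 hq with hqj | hqT
  · omega
  · exact absurd (hj q hqT).1 (by omega)
  · exact hqj ▸ (hj p hpT).2
  · exact hT p hpT q hqT hpq

lemma IsMaxFeasible.card_eq {I J : Finset ℕ} (hI : IsMaxFeasible a S I)
    (hJ : IsMaxFeasible a S J) : I.card = J.card :=
  le_antisymm (hJ.2.2 I hI.1 hI.2.1) (hI.2.2 J hJ.1 hJ.2.1)

lemma mem_chainsEndingAt {i : ℕ} {T : Finset ℕ} :
    T ∈ chainsEndingAt a S i ↔ T ⊆ S ∧ Feasible a T ∧ i ∈ T ∧ ∀ j ∈ T, j ≤ i := by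
  simp [chainsEndingAt]

lemma one_le_height {i : ℕ} (hi : i ∈ S) : 1 ≤ height a S i :=
  le_sup (f := card) (mem_chainsEndingAt.2 ⟨singleton_subset_iff.2 hi,
    feasible_singleton a i, mem_singleton_self i, fun _ hj => (mem_singleton.1 hj).le⟩)

lemma height_le_card {I : Finset ℕ} (hI : IsMaxFeasible a S I) (i : ℕ) :
    height a S i ≤ I.card :=
  Finset.sup_le fun T hT => hI.2.2 T (mem_chainsEndingAt.1 hT).1 (mem_chainsEndingAt.1 hT).2.1

lemma height_lt_height {i j : ℕ} (hj : j ∈ S) (hij : i < j) (ha : a i < a j) :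
    height a S i < height a S j := by
  refine (Finset.sup_lt_iff (one_le_height hj)).2 fun T hT => ?_
  obtain ⟨hTS, hT, hiT, hle⟩ := mem_chainsEndingAt.1 hT
  have hjT : j ∉ T := fun h => absurd (hle j h) (by omega)
  have hchain : insert j T ∈ chainsEndingAt a S j := by
    refine mem_chainsEndingAt.2 ⟨insert_subset hj hTS, hT.insert fun x hx => ?_,
      mem_insert_self j T, fun x hx => ?_⟩
    · rcases (hle x hx).lt_or_eq with hxi | rfl
      · exact ⟨hxi.trans hij, (hT x hx i hiT hxi).trans ha⟩
      · exact ⟨hij, ha⟩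
    · rcases mem_insert.1 hx with rfl | hx
      · exact le_rfl
      · exact (hle x hx).trans hij.le
  calc T.card < (insert j T).card := by rw [card_insert_of_notMem hjT]; omega
    _ ≤ height a S j := le_sup hchain

lemma height_injOn {X : Finset ℕ} (hXS : X ⊆ S) (hX : Feasible a X) :
    Set.InjOn (height a S) X := by
  intro p hp q hq hpq
  by_contra hne
  rcases lt_or_gt_of_ne hne with h | h
  · exact (height_lt_height (hXS hq) h (hX p hp q hq h)).ne hpq
  · exact (height_lt_height (hXS hp) h (hX q hq p hp h)).ne' hpq

lemma IsMaxFeasible.image_height {X : Finset ℕ} (hX : IsMaxFeasible a S X) :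
    X.image (height a S) = Icc 1 X.card := by
  refine eq_of_subset_of_card_le (fun t ht => ?_) ?_
  · obtain ⟨x, hx, rfl⟩ := mem_image.1 ht
    exact mem_Icc.2 ⟨one_le_height (hX.1 hx), height_le_card hX x⟩
  · rw [card_image_of_injOn (height_injOn hX.1 hX.2.1), Nat.card_Icc]
    omega

lemma lt_of_height_eq (hinj : Set.InjOn a S) {i j : ℕ} (hi : i ∈ S) (hj : j ∈ S)
    (hij : i < j) (h : height a S i = height a S j) : a j < a i := by
  rcases lt_trichotomy (a i) (a j) with hlt | heq | hgt
  · exact absurd h (height_lt_height hj hij hlt).ne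
  · exact absurd (hinj hi hj heq) hij.ne
  · exact hgt

lemma card_le_two_of_antitone (hdec : NoDecreasingTriple a S) {T : Finset ℕ} (hTS : T ⊆ S)
    (hT : ∀ x ∈ T, ∀ y ∈ T, x < y → a y < a x) : T.card ≤ 2 := by
  by_contra! h3
  have hne : T.Nonempty := card_pos.1 (by omega)
  obtain ⟨y, hy⟩ : ((T.erase (T.min' hne)).erase (T.max' hne)).Nonempty := by
    have h1 := pred_card_le_card_erase (s := T) (a := T.min' hne)
    have h2 := pred_card_le_card_erase (s := T.erase (T.min' hne)) (a := T.max' hne)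
    exact card_pos.1 (by omega)
  obtain ⟨hyz, hyx, hyT⟩ : y ≠ T.max' hne ∧ y ≠ T.min' hne ∧ y ∈ T := by
    simpa only [mem_erase] using hy
  have hxy := lt_of_le_of_ne (T.min'_le y hyT) hyx.symm
  have hyz := lt_of_le_of_ne (T.le_max' y hyT) hyz
  exact hdec _ (hTS (T.min'_mem hne)) y (hTS hyT) _ (hTS (T.max'_mem hne)) hxy hyz
    (hT _ (T.min'_mem hne) y hyT hxy) (hT y hyT _ (T.max'_mem hne) hyz)

lemma eq_or_eq_or_eq_of_height_eq (hinj : Set.InjOn a S) (hdec : NoDecreasingTriple a S)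
    {u v w : ℕ} (hu : u ∈ S) (hv : v ∈ S) (hw : w ∈ S)
    (huv : height a S u = height a S v) (hvw : height a S v = height a S w) :
    u = v ∨ v = w ∨ u = w := by
  by_contra! hne
  have hTS : ({u, v, w} : Finset ℕ) ⊆ S := by simp [insert_subset_iff, hu, hv, hw]
  have h3 : ({u, v, w} : Finset ℕ).card = 3 :=
    card_eq_three.2 ⟨u, v, w, hne.1, hne.2.2, hne.2.1, rfl⟩
  have h2 := card_le_two_of_antitone hdec hTS fun x hx y hy hxy =>
    lt_of_height_eq hinj (hTS hx) (hTS hy) hxy (by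
      simp only [mem_insert, mem_singleton] at hx hy
      rcases hx with rfl | rfl | rfl <;> rcases hy with rfl | rfl | rfl <;> omega)
  omega

end Height

section Median

variable {α : Type*} [DecidableEq α]

def median3 (I X J : Finset α) : Finset α := I ∩ X ∪ X ∩ J ∪ I ∩ J

@[simp]
lemma mem_median3 {I X J : Finset α} {e : α} :
    e ∈ median3 I X J ↔ e ∈ I ∧ e ∈ X ∨ e ∈ X ∧ e ∈ J ∨ e ∈ I ∧ e ∈ J := by
  simp [median3]

lemma median3_self_left (I J : Finset α) : median3 I I J = I := by
  ext; simp only [mem_median3]; tauto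

lemma median3_self_right (I J : Finset α) : median3 I J J = J := by
  ext; simp only [mem_median3]; tauto

lemma inter_subset_median3 (I X J : Finset α) : I ∩ J ⊆ median3 I X J :=
  subset_union_right

lemma median3_subset_union (I X J : Finset α) : median3 I X J ⊆ I ∪ J := by
  intro e; simp only [mem_median3, mem_union]; tauto

end Median

lemma feasible_median3 {a : ℕ → ℕ} {I X J : Finset ℕ} (hI : Feasible a I) (hX : Feasible a X)
    (hJ : Feasible a J) : Feasible a (median3 I X J) := by
  intro i hi j hj hij
  simp only [mem_median3] at hi hj
  rcases hi with ⟨_, _⟩ | ⟨_, _⟩ | ⟨_, _⟩ <;> rcases hj with ⟨_, _⟩ | ⟨_, _⟩ | ⟨_, _⟩ <;>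
    first
    | exact hI i ‹_› j ‹_› hij
    | exact hX i ‹_› j ‹_› hij
    | exact hJ i ‹_› j ‹_› hij

theorem isMaxFeasible_median3 {a : ℕ → ℕ} {S I X J : Finset ℕ} (hinj : Set.InjOn a S)
    (hdec : NoDecreasingTriple a S) (hI : IsMaxFeasible a S I) (hX : IsMaxFeasible a S X)
    (hJ : IsMaxFeasible a S J) : IsMaxFeasible a S (median3 I X J) := by
  have hsub : median3 I X J ⊆ S := (median3_subset_union I X J).trans (union_subset hI.1 hJ.1)
  refine ⟨hsub, feasible_median3 hI.2.1 hX.2.1 hJ.2.1, fun T hTS hT => (hI.2.2 T hTS hT).trans ?_⟩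
  have hcover : Icc 1 I.card ⊆ (median3 I X J).image (height a S) := by
    intro t ht
    obtain ⟨u, hu, hut⟩ := mem_image.1 (hI.image_height ▸ ht)
    obtain ⟨v, hv, hvt⟩ := mem_image.1 (hX.image_height ▸ hI.card_eq hX ▸ ht)
    obtain ⟨w, hw, hwt⟩ := mem_image.1 (hJ.image_height ▸ hI.card_eq hJ ▸ ht)
    rcases eq_or_eq_or_eq_of_height_eq hinj hdec (hI.1 hu) (hX.1 hv) (hJ.1 hw)
      (hut.trans hvt.symm) (hvt.trans hwt.symm) with rfl | rfl | rfl
    · exact mem_image.2 ⟨u, by simp [hu, hv], hut⟩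
    · exact mem_image.2 ⟨v, by simp [hv, hw], hvt⟩
    · exact mem_image.2 ⟨u, by simp [hu, hw], hut⟩
  calc I.card = (Icc 1 I.card).card := by simp
    _ ≤ ((median3 I X J).image (height a S)).card := card_le_card hcover
    _ ≤ (median3 I X J).card := card_image_le

section Reconfiguration

lemma ReconStep.card_eq {X Y : Finset ℕ} (h : ReconStep X Y) : Y.card = X.card := by
  obtain ⟨j, k, hj, hk, rfl⟩ := h
  rw [sdiff_singleton_eq_erase, card_erase_of_mem (mem_insert_of_mem hk),
    card_insert_of_notMem hj, Nat.add_sub_cancel]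

lemma reconStep_of_forall_mem_iff {X Y : Finset ℕ} {j k : ℕ} (hc : X.card = Y.card)
    (hne : X ≠ Y) (h : ∀ e, e ≠ j → e ≠ k → (e ∈ X ↔ e ∈ Y)) : ReconStep X Y := by
  obtain ⟨y, hyY, hyX⟩ := not_subset.1 fun hYX => hne (eq_of_subset_of_card_le hYX hc.le).symm
  obtain ⟨x, hxX, hxY⟩ := not_subset.1 fun hXY => hne (eq_of_subset_of_card_le hXY hc.ge)
  have hx : x = j ∨ x = k := by
    by_contra! hx
    exact hxY ((h x hx.1 hx.2).1 hxX)
  have hy : y = j ∨ y = k := by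
    by_contra! hy
    exact hyX ((h y hy.1 hy.2).2 hyY)
  refine ⟨y, x, hyX, hxX, ?_⟩
  ext e
  simp only [mem_sdiff, mem_insert, mem_singleton]
  by_cases hex : e = x
  · subst hex
    simp [hxY]
  by_cases hey : e = y
  · subst hey
    simp [hyY, hex]
  have hxy : x ≠ y := fun h => hyX (h ▸ hxX)
  have := h e (by omega) (by omega)
  tauto

lemma median3_step {I J X Y : Finset ℕ} (hXY : X = Y ∨ ReconStep X Y)
    (hc : (median3 I X J).card = (median3 I Y J).card) :
    median3 I X J = median3 I Y J ∨ ReconStep (median3 I X J) (median3 I Y J) := by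
  rcases hXY with rfl | ⟨j, k, hj, hk, rfl⟩
  · exact .inl rfl
  by_cases heq : median3 I X J = median3 I (insert j X \ {k}) J
  · exact .inl heq
  refine .inr (reconStep_of_forall_mem_iff (j := j) (k := k) hc heq fun e hej hek => ?_)
  simp [hej, hek]

lemma card_sdiff_add_one_of_reconStep {I J Y : Finset ℕ} (h : ReconStep I Y)
    (hIJ : I ∩ J ⊆ Y) (hY : Y ⊆ I ∪ J) : (Y \ J).card + 1 = (I \ J).card := by
  obtain ⟨j, k, hj, hk, rfl⟩ := h
  have hjk : j ≠ k := fun h => hj (h ▸ hk)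
  have hjJ : j ∈ J := by
    have := hY (by simp [hjk] : j ∈ insert j I \ {k})
    simpa [hj] using this
  have hkJ : k ∉ J := fun hkJ => by simpa using hIJ (mem_inter.2 ⟨hk, hkJ⟩)
  have hdiff : (insert j I \ {k}) \ J = (I \ J).erase k := by
    ext e
    simp only [mem_sdiff, mem_insert, mem_singleton, mem_erase]
    grind
  rw [hdiff, card_erase_add_one (mem_sdiff.2 ⟨hk, hkJ⟩)]

def IsLazyWalk (P : Finset ℕ → Prop) (ℓ : ℕ) (f : ℕ → Finset ℕ) : Prop :=
  (∀ i ≤ ℓ, P (f i)) ∧ ∀ i < ℓ, f i = f (i + 1) ∨ ReconStep (f i) (f (i + 1))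

variable {a : ℕ → ℕ} {S : Finset ℕ} {ℓ : ℕ} {f : ℕ → Finset ℕ}

lemma IsLazyWalk.tail {P : Finset ℕ → Prop} (hf : IsLazyWalk P (ℓ + 1) f) :
    IsLazyWalk P ℓ fun i => f (i + 1) :=
  ⟨fun i hi => hf.1 (i + 1) (by omega), fun i hi => hf.2 (i + 1) (by omega)⟩

lemma IsLazyWalk.map_median3 (hinj : Set.InjOn a S) (hdec : NoDecreasingTriple a S)
    (hf : IsLazyWalk (IsMaxFeasible a S) ℓ f) {I J : Finset ℕ} (hI : IsMaxFeasible a S I)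
    (hJ : IsMaxFeasible a S J) : IsLazyWalk (IsMaxFeasible a S) ℓ fun i => median3 I (f i) J := by
  have hmed : ∀ i ≤ ℓ, IsMaxFeasible a S (median3 I (f i) J) := fun i hi =>
    isMaxFeasible_median3 hinj hdec hI (hf.1 i hi) hJ
  exact ⟨hmed, fun i hi => median3_step (hf.2 i hi)
    ((hmed i hi.le).card_eq (hmed (i + 1) hi))⟩

lemma ReconSeq.isLazyWalk (hf : ReconSeq a S ℓ f) (h0 : IsMaxFeasible a S (f 0)) :
    IsLazyWalk (IsMaxFeasible a S) ℓ f := by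
  have hcard : ∀ i ≤ ℓ, (f i).card = (f 0).card := by
    intro i
    induction i with
    | zero => intro _; rfl
    | succ i ih => intro hi; rw [(hf.2 i (by omega)).card_eq, ih (by omega)]
  exact ⟨fun i hi => ⟨(hf.1 i hi).1, (hf.1 i hi).2,
    fun T hTS hT => (h0.2.2 T hTS hT).trans (hcard i hi).ge⟩, fun i hi => .inr (hf.2 i hi)⟩

lemma ReconSeq.cons {X : Finset ℕ} {g : ℕ → Finset ℕ} (hXS : X ⊆ S) (hX : Feasible a X)
    (hstep : ReconStep X (g 0)) (hg : ReconSeq a S ℓ g) :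
    ReconSeq a S (ℓ + 1) fun | 0 => X | i + 1 => g i := by
  refine ⟨fun i hi => ?_, fun i hi => ?_⟩ <;> cases i
  · exact ⟨hXS, hX⟩
  · exact hg.1 _ (by omega)
  · exact hstep
  · exact hg.2 _ (by omega)

theorem IsLazyWalk.exists_reconSeq (hinj : Set.InjOn a S) (hdec : NoDecreasingTriple a S)
    (hf : IsLazyWalk (IsMaxFeasible a S) ℓ f) :
    ∃ g, ReconSeq a S (f 0 \ f ℓ).card g ∧ g 0 = f 0 ∧ g (f 0 \ f ℓ).card = f ℓ := by
  induction ℓ generalizing f with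
  | zero =>
    refine ⟨fun _ => f 0, ⟨fun _ _ => ⟨(hf.1 0 le_rfl).1, (hf.1 0 le_rfl).2.1⟩, ?_⟩, rfl, rfl⟩
    simp
  | succ m ih =>
    have hI := hf.1 0 (by omega)
    have hJ := hf.1 (m + 1) le_rfl
    have hproj := hf.map_median3 hinj hdec hI hJ
    obtain ⟨g, hg, hg0, hgm⟩ := ih hproj.tail
    simp only [median3_self_right] at hg hgm
    rcases hproj.2 0 (by omega) with heq | hstep
    · simp only [median3_self_left] at heq
      rw [← heq] at hg hg0 hgm
      exact ⟨g, hg, hg0, hgm⟩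
    · simp only [median3_self_left] at hstep
      rw [← card_sdiff_add_one_of_reconStep hstep (inter_subset_median3 _ _ _)
        (median3_subset_union _ _ _)]
      exact ⟨_, hg.cons hI.1 hI.2.1 (hg0 ▸ hstep), rfl, hgm⟩

end Reconfiguration

theorem stmt12_general (n : ℕ) (a : ℕ → ℕ)
    (hinj : ∀ i ∈ Finset.Icc 1 n, ∀ j ∈ Finset.Icc 1 n, a i = a j → i = j)
    (hbip : (permGraph a n).Colorable 2)
    (I J : Finset ℕ) (hI : MaxFeasibleIcc a n I)
    (h : ∃ ℓ f, ReconSeq a (Finset.Icc 1 n) ℓ f ∧ f 0 = I ∧ f ℓ = J) :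
    ∃ f, ReconSeq a (Finset.Icc 1 n) (I \ J).card f ∧
      f 0 = I ∧ f ((I \ J).card) = J := by
  obtain ⟨ℓ, f, hf, rfl, rfl⟩ := h
  exact (hf.isLazyWalk hI).exists_reconSeq (fun i hi j hj => hinj i hi j hj)
    (noDecreasingTriple_of_colorable_two hbip)

/-- Let `a₁, …, aₙ` be distinct integers between `1` and `n` whose permutation
graph is bipartite (2-colorable), and let `I` and `J` be maximum feasible
sets.  If there is a reconfiguration sequence between `I` and `J`, then there
is one of length exactly `|I \ J|`. -/
theorem stmt12 (n : ℕ) (a : ℕ → ℕ) (hn : 0 < n)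
    (hmem : ∀ i ∈ Finset.Icc 1 n, a i ∈ Finset.Icc 1 n)
    (hinj : ∀ i ∈ Finset.Icc 1 n, ∀ j ∈ Finset.Icc 1 n, a i = a j → i = j)
    (hbip : (permGraph a n).Colorable 2)
    (I J : Finset ℕ) (hI : MaxFeasibleIcc a n I) (hJ : MaxFeasibleIcc a n J)
    (h : ∃ ℓ f, ReconSeq a (Finset.Icc 1 n) ℓ f ∧ f 0 = I ∧ f ℓ = J) :
    ∃ f, ReconSeq a (Finset.Icc 1 n) (I \ J).card f ∧
      f 0 = I ∧ f ((I \ J).card) = J :=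
  stmt12_general n a hinj hbip I J hI h
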